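/- If t⁰ is not a global minimizer of ψ, then there exists h ∈ (0,1] such that ψ(h t* + (1−h) t⁰) < ψ(t⁰). -/

import Mathlib

/-- Second-order Taylor expansion of `l` at `t0`, evaluated at `t`:
`l̃(t; t⁰) = l(t⁰) + ⟨∇l(t⁰), t − t⁰⟩ + (1/2)⟨t − t⁰, ∇²l(t⁰)(t − t⁰)⟩`. -/
noncomputable def taylor2 {n : ℕ} (l : (Fin n → ℝ) → ℝ) (t0 t : Fin n → ℝ) : ℝ :=
  l t0 + fderiv ℝ l t0 (t - t0)
    + (1 / 2) * fderiv ℝ (fun x => fderiv ℝ l x) t0 (t - t0) (t - t0)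

/-!
Put `d = t* - t⁰`. If `∇l(t⁰) d + P(t*) - P(t⁰) < 0`, then `ψ` decreases along the segment from
`t⁰` towards `t*` for small `h`, because `P` lies below its chord and `l` has slope `∇l(t⁰) d`
there. Otherwise, as the Hessian of the convex function `l` is positive semidefinite,
`ψ̃(t⁰) ≤ ψ̃(t*)`, so `t⁰` also minimizes the surrogate. The same descent argument applied to `ψ̃`
then gives `∇l(t⁰)(t - t⁰) + P(t) - P(t⁰) ≥ 0` for every `t`, and the gradient inequality
`l(t) ≥ l(t⁰) + ∇l(t⁰)(t - t⁰)` turns this into `ψ(t) ≥ ψ(t⁰)`.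
-/

open Filter Set Topology

section LineRestriction

variable {E F : Type*} [NormedAddCommGroup E] [NormedSpace ℝ E]
  [NormedAddCommGroup F] [NormedSpace ℝ F]

theorem hasDerivAt_comp_add_smul {f : E → F} {x d : E} {t : ℝ}
    (hf : DifferentiableAt ℝ f (x + t • d)) :
    HasDerivAt (fun s : ℝ => f (x + s • d)) (fderiv ℝ f (x + t • d) d) t :=
  hf.hasFDerivAt.comp_hasDerivAt t
    ((((hasDerivAt_id t).smul_const d).const_add x).congr_deriv (one_smul ℝ d))

theorem hasDerivAt_comp_add_smul_zero {f : E → F} {x d : E} (hf : DifferentiableAt ℝ f x) :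
    HasDerivAt (fun s : ℝ => f (x + s • d)) (fderiv ℝ f x d) 0 := by
  simpa using hasDerivAt_comp_add_smul (t := 0) (d := d) (by simpa using hf)

theorem ConvexOn.comp_add_smul {f : E → ℝ} (hf : ConvexOn ℝ univ f) (x d : E) :
    ConvexOn ℝ univ (fun s : ℝ => f (x + s • d)) := by
  simpa [Function.comp_def, AffineMap.lineMap_apply_module', add_comm]
    using hf.comp_affineMap (AffineMap.lineMap x (x + d))

end LineRestriction

section Convex

variable {E : Type*} [NormedAddCommGroup E] [NormedSpace ℝ E] {f : E → ℝ}

theorem ConvexOn.add_fderiv_sub_le (hf : ConvexOn ℝ univ f) {x : E}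
    (hfx : DifferentiableAt ℝ f x) (y : E) : f x + fderiv ℝ f x (y - x) ≤ f y := by
  have h := (hf.comp_add_smul x (y - x)).le_slope_of_hasDerivAt (mem_univ 0) (mem_univ 1)
    zero_lt_one (hasDerivAt_comp_add_smul_zero hfx)
  simp only [slope_def_field, zero_smul, add_zero, one_smul, add_sub_cancel, sub_zero,
    div_one] at h
  linarith

theorem ConvexOn.fderiv_fderiv_apply_self_nonneg (hf : ConvexOn ℝ univ f)
    (hf₁ : Differentiable ℝ f) {x : E} (hf₂ : DifferentiableAt ℝ (fderiv ℝ f) x) (d : E) :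
    0 ≤ fderiv ℝ (fderiv ℝ f) x d d := by
  have hderiv : deriv (fun s : ℝ => f (x + s • d)) = fun s => fderiv ℝ f (x + s • d) d :=
    funext fun s => (hasDerivAt_comp_add_smul (hf₁ _)).deriv
  have hmono : Monotone fun s : ℝ => fderiv ℝ f (x + s • d) d := by
    rw [← hderiv, ← monotoneOn_univ]
    exact (hf.comp_add_smul x d).monotoneOn_deriv fun s _ =>
      (hasDerivAt_comp_add_smul (hf₁ _)).differentiableAt
  exact ((ContinuousLinearMap.apply ℝ ℝ d).hasFDerivAt.comp_hasDerivAt 0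
    (hasDerivAt_comp_add_smul_zero hf₂)).nonneg_of_monotone hmono

end Convex

theorem exists_mem_Ioc_add_lt_of_hasDerivAt {E : Type*} [AddCommGroup E] [Module ℝ E]
    {f P : E → ℝ} (hP : ConvexOn ℝ univ P) {x y : E} {D : ℝ}
    (hf : HasDerivAt (fun s : ℝ => f (x + s • (y - x))) D 0) (hD : D + (P y - P x) < 0) :
    ∃ h ∈ Ioc (0 : ℝ) 1, f (x + h • (y - x)) + P (x + h • (y - x)) < f x + P x := by
  have hslope : Tendsto (fun s : ℝ => (f (x + s • (y - x)) - f x) / s) (𝓝[>] 0) (𝓝 D) := by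
    simpa [div_eq_inv_mul] using hf.tendsto_slope_zero_right
  obtain ⟨h, hlt, hh⟩ := ((hslope.eventually_lt_const (by linarith : D < -(P y - P x))).and
    (Ioc_mem_nhdsGT one_pos)).exists
  refine ⟨h, hh, ?_⟩
  have hPh : P (x + h • (y - x)) ≤ (1 - h) * P x + h * P y := by
    have := hP.2 (mem_univ x) (mem_univ y) (sub_nonneg.2 hh.2) hh.1.le (by ring)
    rwa [show (1 - h) • x + h • y = x + h • (y - x) by module] at this
  rw [div_lt_iff₀ hh.1] at hlt
  nlinarith

section Taylor

variable {n : ℕ} (l : (Fin n → ℝ) → ℝ) (x : Fin n → ℝ)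

@[simp]
theorem taylor2_self : taylor2 l x x = l x := by
  simp [taylor2]

theorem hasDerivAt_taylor2_add_smul (u : Fin n → ℝ) :
    HasDerivAt (fun s : ℝ => taylor2 l x (x + s • u)) (fderiv ℝ l x u) 0 := by
  have hquad : HasDerivAt (fun s : ℝ => l x + s * fderiv ℝ l x u
      + s ^ 2 * ((1 / 2) * fderiv ℝ (fderiv ℝ l) x u u)) (fderiv ℝ l x u) 0 := by
    simpa using (((hasDerivAt_id 0).mul_const _).const_add _).fun_add
      ((hasDerivAt_pow 2 (0 : ℝ)).mul_const _)
  refine hquad.congr_of_eventuallyEq (Eventually.of_forall fun s => ?_)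
  simp only [taylor2, add_sub_cancel_left, map_smul, smul_apply, smul_eq_mul]
  ring

end Taylor

/-- if `t⁰` is not a global minimizer of `ψ = l + P`, then there exists
`h ∈ (0, 1]` such that `ψ(h t* + (1 − h) t⁰) < ψ(t⁰)`, where `t*` is a global minimizer
of the surrogate `ψ̃(·; t⁰) = l̃(·; t⁰) + P`. -/
theorem stmt1 {n : ℕ} (l P : (Fin n → ℝ) → ℝ)
    (hl_smooth : ContDiff ℝ 2 l) (hl_conv : ConvexOn ℝ Set.univ l)
    (hP_conv : ConvexOn ℝ Set.univ P)
    (t0 tstar : Fin n → ℝ)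
    (ψ : (Fin n → ℝ) → ℝ) (hψ : ∀ t, ψ t = l t + P t)
    (ψt : (Fin n → ℝ) → ℝ) (hψt : ∀ t, ψt t = taylor2 l t0 t + P t)
    (htstar : ∀ t, ψt tstar ≤ ψt t)
    (hnotmin : ¬ ∀ t, ψ t0 ≤ ψ t) :
    ∃ h ∈ Set.Ioc (0 : ℝ) 1, ψ (h • tstar + (1 - h) • t0) < ψ t0 := by
  have hl_diff : Differentiable ℝ l := hl_smooth.differentiable two_ne_zero
  have hl_diff₂ : Differentiable ℝ (fderiv ℝ l) :=
    (hl_smooth.fderiv_right (m := 1) le_rfl).differentiable one_ne_zero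
  suffices hdesc : fderiv ℝ l t0 (tstar - t0) + (P tstar - P t0) < 0 by
    obtain ⟨h, hh, hlt⟩ :=
      exists_mem_Ioc_add_lt_of_hasDerivAt hP_conv (hasDerivAt_comp_add_smul_zero (hl_diff t0))
        hdesc
    refine ⟨h, hh, ?_⟩
    rwa [hψ, hψ, show h • tstar + (1 - h) • t0 = t0 + h • (tstar - t0) by module]
  by_contra! hflat
  have ht0_min : ∀ t, ψt t0 ≤ ψt t := by
    refine fun t => le_trans ?_ (htstar t)
    have hhess := hl_conv.fderiv_fderiv_apply_self_nonneg hl_diff (hl_diff₂ t0) (tstar - t0)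
    rw [hψt, hψt, taylor2_self, taylor2]
    linarith
  obtain ⟨t1, ht1⟩ : ∃ t1, ψ t1 < ψ t0 := by simpa using hnotmin
  have hopt : 0 ≤ fderiv ℝ l t0 (t1 - t0) + (P t1 - P t0) := by
    by_contra! hneg
    obtain ⟨h, -, hlt⟩ :=
      exists_mem_Ioc_add_lt_of_hasDerivAt hP_conv (hasDerivAt_taylor2_add_smul l t0 _) hneg
    have hmin := ht0_min (t0 + h • (t1 - t0))
    rw [hψt, hψt] at hmin
    linarith
  have hgrad := hl_conv.add_fderiv_sub_le (hl_diff t0) t1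
  rw [hψ, hψ] at ht1
  linarith
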